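/- For every n ≥ 2 and every v ∈ V^{⊗n} with θ_n v = v, one has Δ_nP_n v = (−1)^{n−1} \overline{P_n \overline{v}}, where the bar denotes the bar involution. -/

import Mathlib

open scoped BigOperators TensorProduct

/-- The tensor algebra `T(V)` of a vector space `V` with basis `v_0, …, v_{N-1}`:
its basis is the set of words in the letters `v_i`, and multiplication is concatenation. -/
abbrev TV (K : Type*) [Field K] (N : ℕ) : Type _ := MonoidAlgebra K (FreeMonoid (Fin N))

section Ops

variable (K : Type*) [Field K] {N : ℕ}

/-- Swap the letters at (0-based) positions `k-1` and `k` of a list. -/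
def swapList {α : Type*} (l : List α) (k : ℕ) : List α :=
  match l[k-1]?, l[k]? with
  | some a, some b => (l.set (k - 1) b).set k a
  | _, _ => l

/-- The braiding coefficient `q_{ab}` for the letters at positions `k-1`, `k`. -/
def coefAt (q : Fin N → Fin N → K) (l : List (Fin N)) (k : ℕ) : K :=
  match l[k-1]?, l[k]? with
  | some a, some b => q a b
  | _, _ => 1

/-- The action of the braid-group generator `σ_k` (paper indexing) on tensor powers of `V`:
on a word `w` of length `n` with `1 ≤ k ≤ n-1` it swaps the letters at positions `k`, `k+1`
(1-based) and multiplies by the braiding coefficient. -/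
noncomputable def sigOp (q : Fin N → Fin N → K) (k : ℕ) : TV K N →ₗ[K] TV K N :=
  (MonoidAlgebra.coeffLinearEquiv K).symm.conj <| Finsupp.lsum K (fun w =>
    if 1 ≤ k ∧ k < (FreeMonoid.toList w).length then
      Finsupp.lsingle (FreeMonoid.ofList (swapList (FreeMonoid.toList w) k)) ∘ₗ
        LinearMap.lsmul K K (coefAt K q (FreeMonoid.toList w) k)
    else Finsupp.lsingle w)

/-- The operator attached to a word `σ_{i₁}σ_{i₂}⋯σ_{i_r}` in the braid generators. -/
noncomputable def wordOp (q : Fin N → Fin N → K) (l : List ℕ) : Module.End K (TV K N) :=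
  (l.map (sigOp K q)).prod

/-- The right differential element `T_n = 1 + σ_{n−1} + σ_{n−1}σ_{n−2} + ⋯ + σ_{n−1}⋯σ_1`
acting on `V^{⊗n}`. -/
noncomputable def TOp (q : Fin N → Fin N → K) (n : ℕ) : Module.End K (TV K N) :=
  ∑ j ∈ Finset.range n, wordOp K q ((List.range' (n - j) j).reverse)

/-- The left differential element `U_n = 1 + σ_1 + σ_1σ_2 + ⋯ + σ_1σ_2⋯σ_{n−1}`
acting on `V^{⊗n}`. -/
noncomputable def UOp (q : Fin N → Fin N → K) (n : ℕ) : Module.End K (TV K N) :=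
  ∑ j ∈ Finset.range n, wordOp K q (List.range' 1 j)

/-- The right Dynkin element `P_n = (1 − σ_{n−1}⋯σ_1)(1 − σ_{n−1}⋯σ_2)⋯(1 − σ_{n−1})`. -/
noncomputable def POp (q : Fin N → Fin N → K) (n : ℕ) : Module.End K (TV K N) :=
  ((List.range' 1 (n - 1)).map (fun j =>
    1 - wordOp K q ((List.range' j (n - j)).reverse))).prod

/-- The left Dynkin element `Q_n = (1 − σ_1⋯σ_{n−1})(1 − σ_1⋯σ_{n−2})⋯(1 − σ_1)`. -/
noncomputable def QOp (q : Fin N → Fin N → K) (n : ℕ) : Module.End K (TV K N) :=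
  (((List.range' 1 (n - 1)).reverse).map (fun m =>
    1 - wordOp K q (List.range' 1 m))).prod

/-- `T_n' = (1 − σ_{n−1}²σ_{n−2}⋯σ_1)(1 − σ_{n−1}²σ_{n−2}⋯σ_2)⋯(1 − σ_{n−1}²)`. -/
noncomputable def TpOp (q : Fin N → Fin N → K) (n : ℕ) : Module.End K (TV K N) :=
  ((List.range' 1 (n - 1)).map (fun j =>
    1 - wordOp K q ((n - 1) :: (List.range' j (n - j)).reverse))).prod

/-- `U_n' = (1 − σ_1²σ_2⋯σ_{n−1})(1 − σ_1²σ_2⋯σ_{n−2})⋯(1 − σ_1²)`, viewed inside the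
operators on `V^{⊗m}` for any `m ≥ n` (standard inclusion `σ_i ↦ σ_i`). -/
noncomputable def UpOp (q : Fin N → Fin N → K) (n : ℕ) : Module.End K (TV K N) :=
  (((List.range' 1 (n - 1)).reverse).map (fun m =>
    1 - wordOp K q (1 :: List.range' 1 m))).prod

/-- `X_{m,n} = (1 − σ_{n−1}²σ_{n−2}⋯σ_{n−m})⋯(1 − σ_{n−1}²σ_{n−2})(1 − σ_{n−1}²)`;
one has `X_{n-1,n} = T_n'` and `X_{n-2,n} = ι_{n-1}^n(T_{n-1}')`. -/
noncomputable def XOp (q : Fin N → Fin N → K) (n m : ℕ) : Module.End K (TV K N) :=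
  ((List.range' (n - m) m).map (fun j =>
    1 - wordOp K q ((n - 1) :: (List.range' j (n - j)).reverse))).prod

/-- The list of generator indices of the Garside element
`Δ_n = (σ_1⋯σ_{n−1})(σ_1⋯σ_{n−2})⋯(σ_1σ_2)σ_1`. -/
def deltaList (n : ℕ) : List ℕ :=
  (((List.range (n - 1)).reverse).map (fun j => List.range' 1 (j + 1))).flatten

/-- The Garside element `Δ_n` acting on `V^{⊗n}`. -/
noncomputable def deltaOp (q : Fin N → Fin N → K) (n : ℕ) : Module.End K (TV K N) :=
  wordOp K q (deltaList n)

/-- The central element `θ_n = Δ_n²` acting on `V^{⊗n}`. -/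
noncomputable def thetaOp (q : Fin N → Fin N → K) (n : ℕ) : Module.End K (TV K N) :=
  deltaOp K q n ^ 2

/-- The degree-`n` component `V^{⊗n}` of the tensor algebra. -/
noncomputable def deg (N n : ℕ) : Submodule K (TV K N) :=
  (Finsupp.supported K K {w : FreeMonoid (Fin N) | (FreeMonoid.toList w).length = n}).comap
    (MonoidAlgebra.coeffLinearEquiv K).toLinearMap

/-- The right differential operator `∂_i^R`: on a monomial `v_{f₁}⋯v_{f_n}` it is
`Σ_{k : f_k = i} (∏_{l>k} q_{i f_l}) · v_{f₁}⋯v̂_{f_k}⋯v_{f_n}`. -/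
noncomputable def rdiff (q : Fin N → Fin N → K) (i : Fin N) : TV K N →ₗ[K] TV K N :=
  (MonoidAlgebra.coeffLinearEquiv K).symm.conj <| Finsupp.lsum K (fun w =>
    ∑ k ∈ Finset.range (FreeMonoid.toList w).length,
      if (FreeMonoid.toList w)[k]? = some i then
        Finsupp.lsingle (FreeMonoid.ofList ((FreeMonoid.toList w).eraseIdx k)) ∘ₗ
          LinearMap.lsmul K K
            ((((FreeMonoid.toList w).drop (k + 1)).map (fun a => q i a)).prod)
      else 0)

/-- The left differential operator `∂_i^L`: on a monomial `v_{f₁}⋯v_{f_n}` it is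
`Σ_{k : f_k = i} (∏_{l<k} q_{f_l i}) · v_{f₁}⋯v̂_{f_k}⋯v_{f_n}`. -/
noncomputable def ldiff (q : Fin N → Fin N → K) (i : Fin N) : TV K N →ₗ[K] TV K N :=
  (MonoidAlgebra.coeffLinearEquiv K).symm.conj <| Finsupp.lsum K (fun w =>
    ∑ k ∈ Finset.range (FreeMonoid.toList w).length,
      if (FreeMonoid.toList w)[k]? = some i then
        Finsupp.lsingle (FreeMonoid.ofList ((FreeMonoid.toList w).eraseIdx k)) ∘ₗ
          LinearMap.lsmul K K
            ((((FreeMonoid.toList w).take k).map (fun a => q a i)).prod)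
      else 0)

end Ops

/-- The bar involution on `T(V)`: the semilinear map fixing every monomial
`v_{i₁}⋯v_{i_n}` and applying the bar involution of the field to coefficients. -/
noncomputable def barT (K : Type*) [Field K] {N : ℕ} (bar : K ≃+* K) (x : TV K N) :
    TV K N :=
  MonoidAlgebra.ofCoeff (Finsupp.mapRange (⇑bar) (map_zero bar) x.coeff)

/-! ### Auxiliary development for statement 18 -/

section Aux

variable {K : Type*} [Field K] {N : ℕ}

open FreeMonoid Finsupp

/-- Product of `q`-values over all ordered pairs of letters in a word. -/
def dd (q : Fin N → Fin N → K) : List (Fin N) → K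
  | [] => 1
  | a :: l => (l.map (q a)).prod * dd q l

/-- Coefficient picked up when moving the letter at index `i` to the end. -/
def fcoef (q : Fin N → Fin N → K) (d : Fin N) (w : List (Fin N)) (i : ℕ) : K :=
  ((w.drop (i+1)).map (q (w.getD i d))).prod

/-- Move the letter at index `i` to the end. -/
def me (d : Fin N) (w : List (Fin N)) (i : ℕ) : List (Fin N) :=
  w.eraseIdx i ++ [w.getD i d]

/-- Coefficient of the term of the Dynkin element indexed by a set `S`. -/
def Ccoef (q : Fin N → Fin N → K) (d : Fin N) (w : List (Fin N)) (S : Finset ℕ) : K :=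
  ∏ i ∈ S, fcoef q d w i

/-- The word of the term of the Dynkin element indexed by a set `S`. -/
def TW (d : Fin N) (w : List (Fin N)) (S : Finset ℕ) : List (Fin N) :=
  (((List.range w.length).filter (fun i => i ∉ S)).map (fun i => w.getD i d)) ++
  ((((List.range w.length).filter (fun i => i ∈ S)).reverse).map (fun i => w.getD i d))

theorem wordOp_nil (q : Fin N → Fin N → K) : wordOp K q [] = 1 := rfl

theorem wordOp_append (q : Fin N → Fin N → K) (l₁ l₂ : List ℕ) :
    wordOp K q (l₁ ++ l₂) = wordOp K q l₁ * wordOp K q l₂ := by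
  simp [wordOp]

theorem sigOp_single (q : Fin N → Fin N → K) (k : ℕ) (w : List (Fin N)) (c : K)
    (h1 : 1 ≤ k) (h2 : k < w.length) :
    sigOp K q k (MonoidAlgebra.single (FreeMonoid.ofList w) c) =
      MonoidAlgebra.single (FreeMonoid.ofList (swapList w k)) (coefAt K q w k * c) := by
  rw [sigOp, LinearEquiv.conj_apply, LinearMap.comp_apply, LinearMap.comp_apply]
  erw [Finsupp.lsum_single]
  rw [if_pos]
  · rfl
  · exact ⟨h1, h2⟩


theorem swapList_closed (d : Fin N) (w : List (Fin N)) (i : ℕ) (h : i + 1 < w.length) :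
    swapList w (i+1) =
      w.take i ++ w.getD (i+1) d :: w.getD i d :: w.drop (i+2) := by
  have hi : i < w.length := by omega
  rw [swapList]
  simp only [Nat.add_sub_cancel]
  rw [List.getElem?_eq_getElem hi, List.getElem?_eq_getElem h]
  dsimp only
  rw [List.getD_eq_getElem _ _ hi, List.getD_eq_getElem _ _ h]
  rw [List.set_eq_take_cons_drop _ hi]
  rw [List.set_append_right _ _ (by simp only [List.length_take]; omega)]
  simp [List.length_take, Nat.min_eq_left (le_of_lt hi)]
  rw [List.drop_eq_getElem_cons h]
  rw [List.set_cons_zero]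

theorem coefAt_closed (q : Fin N → Fin N → K) (d : Fin N) (w : List (Fin N)) (i : ℕ)
    (h : i + 1 < w.length) :
    coefAt K q w (i+1) = q (w.getD i d) (w.getD (i+1) d) := by
  have hi : i < w.length := by omega
  rw [coefAt]
  simp only [Nat.add_sub_cancel]
  rw [List.getElem?_eq_getElem hi, List.getElem?_eq_getElem h]
  rw [List.getD_eq_getElem _ _ hi, List.getD_eq_getElem _ _ h]

theorem me_closed (d : Fin N) (w : List (Fin N)) (i : ℕ) :
    me d w i = w.take i ++ w.drop (i+1) ++ [w.getD i d] := by
  rw [me, List.eraseIdx_eq_take_drop_succ]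

theorem me_length (d : Fin N) (w : List (Fin N)) (i : ℕ) (h : i < w.length) :
    (me d w i).length = w.length := by
  simp [me, List.length_eraseIdx, h]
  omega

theorem me_last (d : Fin N) (w : List (Fin N)) (i : ℕ) (h : i + 1 = w.length) :
    me d w i = w := by
  rw [me_closed, List.drop_eq_nil_of_le (by omega), List.append_nil,
    List.getD_eq_getElem _ _ (by omega)]
  rw [List.take_concat_get' w i (by omega)]
  exact List.take_of_length_le (by omega)

theorem fcoef_last (q : Fin N → Fin N → K) (d : Fin N) (w : List (Fin N)) (i : ℕ)
    (h : i + 1 = w.length) : fcoef q d w i = 1 := by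
  simp [fcoef, List.drop_eq_nil_of_le (le_of_eq h.symm)]

theorem me_swap (d : Fin N) (w : List (Fin N)) (i : ℕ) (h : i + 1 < w.length) :
    me d (swapList w (i+1)) (i+1) = me d w i := by
  rw [swapList_closed d w i h]
  have hi : i < w.length := by omega
  have hlt : (w.take i).length = i := by simp; omega
  have hsw : w.take i ++ w.getD (i+1) d :: w.getD i d :: w.drop (i+2)
      = (w.take i ++ [w.getD (i+1) d]) ++ (w.getD i d :: w.drop (i+2)) := by simp
  have hfl : (w.take i ++ [w.getD (i+1) d]).length = i + 1 := by simp [hlt]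
  rw [hsw, me]
  rw [List.eraseIdx_append_of_length_le (le_of_eq hfl)]
  rw [List.getD_append_right _ _ _ _ (le_of_eq hfl)]
  rw [hfl]
  simp only [Nat.sub_self, List.eraseIdx_cons_zero, List.getD_cons_zero]
  rw [me_closed]
  rw [List.drop_eq_getElem_cons h, List.getD_eq_getElem _ _ h]
  simp

theorem fcoef_swap (q : Fin N → Fin N → K) (d : Fin N) (w : List (Fin N)) (i : ℕ)
    (h : i + 1 < w.length) :
    fcoef q d (swapList w (i+1)) (i+1) * coefAt K q w (i+1) = fcoef q d w i := by
  rw [swapList_closed d w i h, coefAt_closed q d w i h]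
  have hi : i < w.length := by omega
  have hfl : (w.take i ++ [w.getD (i+1) d]).length = i + 1 := by simp; omega
  have hfl2 : ((w.take i ++ [w.getD (i+1) d]) ++ [w.getD i d]).length = i + 2 := by
    simp; omega
  have hsw : w.take i ++ w.getD (i+1) d :: w.getD i d :: w.drop (i+2)
      = ((w.take i ++ [w.getD (i+1) d]) ++ [w.getD i d]) ++ w.drop (i+2) := by simp
  have hsw' : w.take i ++ w.getD (i+1) d :: w.getD i d :: w.drop (i+2)
      = (w.take i ++ [w.getD (i+1) d]) ++ (w.getD i d :: w.drop (i+2)) := by simp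
  have hdrop : (w.take i ++ w.getD (i+1) d :: w.getD i d :: w.drop (i+2)).drop (i+1+1)
      = w.drop (i+2) := by
    rw [hsw, ← hfl2, List.drop_left]
  have hget : (w.take i ++ w.getD (i+1) d :: w.getD i d :: w.drop (i+2)).getD (i+1) d
      = w.getD i d := by
    rw [hsw', List.getD_append_right _ _ _ _ (le_of_eq hfl)]
    rw [hfl, Nat.sub_self, List.getD_cons_zero]
  rw [fcoef, hdrop, hget]
  conv_rhs => rw [fcoef, List.drop_eq_getElem_cons h]
  rw [List.map_cons, List.prod_cons, List.getD_eq_getElem _ _ h]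
  ring

theorem swapList_length {α : Type*} (l : List α) (k : ℕ) :
    (swapList l k).length = l.length := by
  rw [swapList]
  split <;> simp

theorem wordOp_singleton (q : Fin N → Fin N → K) (k : ℕ) :
    wordOp K q [k] = sigOp K q k := by simp [wordOp]

theorem uOp_single (q : Fin N → Fin N → K) (d : Fin N) :
    ∀ (t i : ℕ) (w : List (Fin N)) (c : K), i + t + 2 = w.length →
    wordOp K q ((List.range' (i+1) (w.length - (i+1))).reverse)
        (MonoidAlgebra.single (FreeMonoid.ofList w) c)
      = MonoidAlgebra.single (FreeMonoid.ofList (me d w i)) (fcoef q d w i * c) := by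
  intro t
  induction t with
  | zero =>
    intro i w c hl
    have h1 : w.length - (i+1) = 1 := by omega
    rw [h1]
    have h2 : List.range' (i+1) 1 = [i+1] := rfl
    rw [h2, List.reverse_singleton, wordOp_singleton,
      sigOp_single _ _ _ _ (by omega) (by omega)]
    have hswme : swapList w (i+1) = me d w i := by
      rw [← me_swap d w i (by omega)]
      exact (me_last d _ (i+1) (by rw [swapList_length]; omega)).symm
    have hco : coefAt K q w (i+1) = fcoef q d w i := by
      have h3 := fcoef_swap q d w i (by omega)
      rwa [fcoef_last q d _ (i+1) (by rw [swapList_length]; omega), one_mul] at h3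
    rw [hswme, hco]
  | succ t ih =>
    intro i w c hl
    have h2 : w.length - (i+1) = (w.length - (i+2)) + 1 := by omega
    rw [h2, List.range'_succ, List.reverse_cons, wordOp_append, Module.End.mul_apply,
      wordOp_singleton, sigOp_single _ _ _ _ (by omega) (by omega)]
    have hlen' : (swapList w (i+1)).length = w.length := swapList_length w (i+1)
    have h3 := ih (i+1) (swapList w (i+1)) (coefAt K q w (i+1) * c) (by rw [hlen']; omega)
    rw [hlen'] at h3
    rw [h3, me_swap d w i (by omega), ← mul_assoc, fcoef_swap q d w i (by omega)]

theorem dd_append_singleton (q : Fin N → Fin N → K) (l : List (Fin N)) (x : Fin N) :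
    dd q (l ++ [x]) = dd q l * (l.map (fun a => q a x)).prod := by
  induction l with
  | nil => simp [dd]
  | cons a l ih =>
    simp only [List.cons_append, dd, List.append_eq]
    rw [ih]
    simp only [List.map_append, List.map_cons, List.map_nil, List.prod_append,
      List.prod_cons, List.prod_nil]
    ring

theorem blockAux (q : Fin N → Fin N → K) (d : Fin N) :
    ∀ (m : ℕ) (u : List (Fin N)) (c : K), m < u.length →
    wordOp K q (List.range' 1 m) (MonoidAlgebra.single (FreeMonoid.ofList u) c) =
      MonoidAlgebra.single (FreeMonoid.ofList (u.getD m d :: u.eraseIdx m))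
        (((u.take m).map (fun a => q a (u.getD m d))).prod * c) := by
  intro m
  induction m with
  | zero =>
    intro u c h
    match u, h with
    | x :: l, _ => simp [wordOp]
  | succ m ih =>
    intro u c h
    have hm : m < u.length := by omega
    have hconcat : List.range' 1 (m+1) = List.range' 1 m ++ [m+1] := by
      have h5 := List.range'_concat (step := 1) (s := 1) (n := m)
      simpa [Nat.add_comm] using h5
    rw [hconcat, wordOp_append, Module.End.mul_apply, wordOp_singleton,
      sigOp_single _ _ _ _ (by omega) h]
    have hlen' : (swapList u (m+1)).length = u.length := swapList_length u (m+1)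
    rw [ih (swapList u (m+1)) _ (by omega)]
    rw [swapList_closed d u m h]
    have htk : (u.take m).length = m := by simp; omega
    have htake : (u.take m ++ u.getD (m+1) d :: u.getD m d :: u.drop (m+2)).take m
        = u.take m := List.take_left' htk
    have hget : (u.take m ++ u.getD (m+1) d :: u.getD m d :: u.drop (m+2)).getD m d
        = u.getD (m+1) d := by
      rw [List.getD_append_right _ _ _ _ (le_of_eq htk), htk, Nat.sub_self,
        List.getD_cons_zero]
    have herase : (u.take m ++ u.getD (m+1) d :: u.getD m d :: u.drop (m+2)).eraseIdx m
        = u.eraseIdx (m+1) := by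
      rw [List.eraseIdx_append_of_length_le (le_of_eq htk), htk, Nat.sub_self,
        List.eraseIdx_cons_zero, List.eraseIdx_eq_take_drop_succ,
        List.getD_eq_getElem _ _ hm, List.append_cons, List.take_concat_get' u m hm]
    rw [htake, hget, herase, ← mul_assoc]
    congr 2
    rw [← List.take_concat_get' u m hm, List.map_append, List.prod_append,
      coefAt_closed q d u m h, List.getD_eq_getElem _ _ hm]
    simp [mul_comm]

theorem deltaList_zero : deltaList 0 = [] := rfl
theorem deltaList_one : deltaList 1 = [] := rfl

theorem deltaList_succ_succ (m : ℕ) :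
    deltaList (m+2) = List.range' 1 (m+1) ++ deltaList (m+1) := by
  show (((List.range (m+1)).reverse).map (fun j => List.range' 1 (j+1))).flatten = _
  rw [List.range_succ, List.reverse_append]
  simp [deltaList]

theorem deltaAux (q : Fin N → Fin N → K) (d : Fin N) :
    ∀ (m : ℕ) (w : List (Fin N)) (c : K), m ≤ w.length →
    wordOp K q (deltaList m) (MonoidAlgebra.single (FreeMonoid.ofList w) c) =
      MonoidAlgebra.single (FreeMonoid.ofList ((w.take m).reverse ++ w.drop m))
        (dd q (w.take m) * c) := by
  intro m
  induction m using Nat.strong_induction_on with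
  | _ m ih =>
    match m with
    | 0 =>
      intro w c _
      simp [deltaList_zero, wordOp_nil, dd]
    | 1 =>
      intro w c h
      match w, h with
      | x :: l, _ =>
        simp [deltaList_one, wordOp_nil, dd]
    | (m+2) =>
      intro w c h
      rw [deltaList_succ_succ, wordOp_append, Module.End.mul_apply]
      rw [ih (m+1) (by omega) w c (by omega)]
      set u := (w.take (m+1)).reverse ++ w.drop (m+1) with hu
      have hulen : u.length = w.length := by simp [hu]; omega
      have htk1 : ((w.take (m+1)).reverse).length = m + 1 := by simp; omega
      rw [blockAux q d (m+1) u _ (by omega)]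
      have hget : u.getD (m+1) d = w.getD (m+1) d := by
        rw [hu, List.getD_append_right _ _ _ _ (le_of_eq htk1), htk1, Nat.sub_self]
        rw [List.getD_eq_getElem _ _ (by simp; omega), List.getD_eq_getElem _ _ (by omega)]
        simp
      have htake : u.take (m+1) = (w.take (m+1)).reverse := by
        rw [hu]; exact List.take_left' htk1
      have herase : u.eraseIdx (m+1) = (w.take (m+1)).reverse ++ w.drop (m+2) := by
        rw [hu, List.eraseIdx_append_of_length_le (le_of_eq htk1), htk1, Nat.sub_self]
        congr 1
        rw [List.drop_eq_getElem_cons (by omega : m+1 < w.length), List.eraseIdx_cons_zero]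
      rw [hget, htake, herase]
      have hword : w.getD (m+1) d :: ((w.take (m+1)).reverse ++ w.drop (m+2))
          = (w.take (m+2)).reverse ++ w.drop (m+2) := by
        rw [← List.take_concat_get' _ _ (by omega : m+1 < w.length), List.reverse_append]
        rw [List.getD_eq_getElem _ _ (by omega)]
        simp
      rw [hword]
      congr 1
      rw [← mul_assoc]
      congr 1
      rw [← List.take_concat_get' _ _ (by omega : m+1 < w.length),
        dd_append_singleton, List.getD_eq_getElem _ _ (by omega)]
      rw [List.map_reverse, List.prod_reverse]
      ring

theorem delta_single (q : Fin N → Fin N → K) (d : Fin N) (n : ℕ) (w : List (Fin N))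
    (c : K) (hw : w.length = n) :
    deltaOp K q n (MonoidAlgebra.single (FreeMonoid.ofList w) c) =
      MonoidAlgebra.single (FreeMonoid.ofList w.reverse) (dd q w * c) := by
  rw [deltaOp, deltaAux q d n w c (le_of_eq hw.symm), ← hw]
  simp

theorem dd_perm (q : Fin N → Fin N → K) (hsym : ∀ a b, q a b = q b a)
    {u v : List (Fin N)} (h : u.Perm v) : dd q u = dd q v := by
  induction h with
  | nil => rfl
  | cons a h ih =>
    simp only [dd, ih, (h.map (q a)).prod_eq]
  | swap a b l =>
    simp only [dd, List.map_cons, List.prod_cons, hsym a b]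
    ring
  | trans h₁ h₂ ih₁ ih₂ => rw [ih₁, ih₂]

theorem dd_reverse (q : Fin N → Fin N → K) (hsym : ∀ a b, q a b = q b a)
    (w : List (Fin N)) : dd q w.reverse = dd q w :=
  dd_perm q hsym (List.reverse_perm w)

theorem theta_single (q : Fin N → Fin N → K) (hsym : ∀ a b, q a b = q b a) (d : Fin N)
    (n : ℕ) (w : List (Fin N)) (c : K) (hw : w.length = n) :
    thetaOp K q n (MonoidAlgebra.single (FreeMonoid.ofList w) c) =
      MonoidAlgebra.single (FreeMonoid.ofList w) (dd q w * dd q w * c) := by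
  rw [thetaOp, pow_two, Module.End.mul_apply, delta_single q d n w c hw,
    delta_single q d n w.reverse _ (by simp [hw]), dd_reverse q hsym, List.reverse_reverse]
  ring_nf

theorem map_getD_range' (d : Fin N) :
    ∀ (c j : ℕ) (l : List (Fin N)), j + c = l.length →
      (List.range' j c).map (fun i => l.getD i d) = l.drop j := by
  intro c
  induction c with
  | zero =>
    intro j l h
    have h2 : l.drop j = [] := List.drop_eq_nil_iff.mpr (by omega)
    simp [h2]
  | succ c ih =>
    intro j l h
    rw [List.range'_succ, List.map_cons, ih (j+1) l (by omega),
      List.drop_eq_getElem_cons (by omega : j < l.length),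
      List.getD_eq_getElem _ _ (by omega)]

theorem map_getD_range (d : Fin N) (l : List (Fin N)) :
    (List.range l.length).map (fun i => l.getD i d) = l := by
  rw [List.range_eq_range', map_getD_range' d l.length 0 l (by omega), List.drop_zero]

theorem range_split (k n : ℕ) (h : k ≤ n) :
    List.range n = List.range k ++ List.range' k (n - k) := by
  rw [List.range_eq_range', List.range_eq_range']
  have := List.range'_append (s := 0) (m := k) (n := n - k) (step := 1)
  simp only [one_mul, Nat.zero_add] at this
  rw [this]
  congr 1
  omega

theorem TW_empty (d : Fin N) (w : List (Fin N)) : TW d w (∅ : Finset ℕ) = w := by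
  have h1 : ((List.range w.length).filter (fun i => i ∉ (∅:Finset ℕ))) = List.range w.length :=
    List.filter_eq_self.mpr (by simp)
  have h2 : ((List.range w.length).filter (fun i => i ∈ (∅:Finset ℕ))) = [] := by simp
  rw [TW, h1, h2, List.reverse_nil, List.map_nil, List.append_nil, map_getD_range]

theorem TW_perm (d : Fin N) (w : List (Fin N)) (S : Finset ℕ) : (TW d w S).Perm w := by
  classical
  rw [TW]
  have h1 : ((((List.range w.length).filter (fun i => i ∈ S)).reverse).map
      (fun i => w.getD i d)).Perm
      (((List.range w.length).filter (fun i => i ∈ S)).map (fun i => w.getD i d)) :=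
    (List.reverse_perm _).map _
  have hperm : (((List.range w.length).filter (fun i => i ∉ S)) ++
      ((List.range w.length).filter (fun i => i ∈ S))).Perm (List.range w.length) := by
    have h := List.filter_append_perm (fun i => decide (i ∉ S)) (List.range w.length)
    have hc : (List.range w.length).filter (fun i => !decide (i ∉ S))
        = (List.range w.length).filter (fun i => decide (i ∈ S)) :=
      List.filter_congr (by intro x _; simp)
    rw [hc] at h
    exact h
  refine (h1.append_left _).trans ?_
  rw [← List.map_append]
  have h2 := hperm.map (fun i => w.getD i d)
  rw [map_getD_range d w] at h2
  exact h2

theorem getD_me_lt (d : Fin N) (w : List (Fin N)) (k i : ℕ) (hik : i < k)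
    (hk : k < w.length) : (me d w k).getD i d = w.getD i d := by
  have htk : (w.take k).length = k := by simp; omega
  rw [me_closed, List.getD_append _ _ _ _ (by simp [htk]; omega),
    List.getD_append _ _ _ _ (by omega : i < (w.take k).length),
    List.getD_eq_getElem _ _ (by omega : i < (w.take k).length),
    List.getD_eq_getElem _ _ (by omega : i < w.length)]
  simp [List.getElem_take]

theorem drop_me_perm (d : Fin N) (w : List (Fin N)) (k i : ℕ) (hik : i < k)
    (hk : k < w.length) : ((me d w k).drop (i+1)).Perm (w.drop (i+1)) := by
  have htk : (w.take k).length = k := by simp; omega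
  rw [me_closed, List.append_assoc, List.drop_append, htk,
    (by omega : i + 1 - k = 0), List.drop_zero]
  have hw : w.drop (i+1) = (w.take k).drop (i+1) ++ (w.getD k d :: w.drop (k+1)) := by
    conv_lhs => rw [← List.take_append_drop k w]
    rw [List.drop_append, htk, (by omega : i + 1 - k = 0), List.drop_zero,
      List.drop_eq_getElem_cons hk, List.getD_eq_getElem _ _ hk]
  rw [hw]
  exact (List.perm_append_singleton _ _).append_left _

theorem fcoef_me (q : Fin N → Fin N → K) (d : Fin N) (w : List (Fin N)) (k i : ℕ)
    (hik : i < k) (hk : k < w.length) : fcoef q d (me d w k) i = fcoef q d w i := by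
  rw [fcoef, fcoef, getD_me_lt d w k i hik hk]
  exact ((drop_me_perm d w k i hik hk).map _).prod_eq

theorem Ccoef_me (q : Fin N → Fin N → K) (d : Fin N) (w : List (Fin N)) (k : ℕ)
    (S : Finset ℕ) (hsub : S ⊆ Finset.range k) (hk : k < w.length) :
    Ccoef q d (me d w k) S = Ccoef q d w S :=
  Finset.prod_congr rfl (fun i hi =>
    fcoef_me q d w k i (Finset.mem_range.mp (hsub hi)) hk)

section Filters

variable (S : Finset ℕ) (k n : ℕ)

theorem fil1 (hsub : ∀ i ∈ S, i < k) (hk : k ≤ n) :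
    (List.range n).filter (fun i => i ∈ S) = (List.range k).filter (fun i => i ∈ S) := by
  rw [range_split k n hk, List.filter_append]
  have h2 : (List.range' k (n-k)).filter (fun i => decide (i ∈ S)) = [] := by
    refine List.filter_eq_nil_iff.mpr ?_
    intro a ha
    have h3 := (List.mem_range'_1.mp ha).1
    simp only [decide_eq_true_eq]
    exact fun hc => absurd (hsub a hc) (by omega)
  rw [h2, List.append_nil]

theorem fil2 (hsub : ∀ i ∈ S, i < k) (hk : k ≤ n) :
    (List.range n).filter (fun i => i ∉ S)
      = (List.range k).filter (fun i => i ∉ S) ++ List.range' k (n - k) := by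
  rw [range_split k n hk, List.filter_append]
  congr 1
  rw [List.filter_eq_self]
  intro a ha
  have h3 := (List.mem_range'_1.mp ha).1
  simp only [decide_eq_true_eq]
  exact fun hc => absurd (hsub a hc) (by omega)

theorem fil3 (hsub : ∀ i ∈ S, i < k) (hk : k < n) :
    (List.range n).filter (fun i => i ∈ insert k S)
      = (List.range k).filter (fun i => i ∈ S) ++ [k] := by
  rw [range_split k n (le_of_lt hk), List.filter_append]
  congr 1
  · refine List.filter_congr ?_
    intro x hx
    have hxk : x < k := List.mem_range.mp hx
    simp only [Finset.mem_insert, decide_eq_decide]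
    constructor
    · rintro (rfl | h)
      · omega
      · exact h
    · exact Or.inr
  · rw [(by omega : n - k = (n - k - 1) + 1), List.range'_succ, List.filter_cons]
    have hkmem : k ∈ insert k S := Finset.mem_insert_self k S
    simp only [hkmem, decide_true]
    have h2 : (List.range' (k+1) (n-k-1)).filter (fun i => decide (i ∈ insert k S)) = [] := by
      refine List.filter_eq_nil_iff.mpr ?_
      intro a ha
      have h3 := (List.mem_range'_1.mp ha).1
      simp only [Finset.mem_insert, decide_eq_true_eq]
      rintro (rfl | h)
      · omega
      · exact absurd (hsub a h) (by omega)
    rw [h2]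
    simp

theorem fil4 (hsub : ∀ i ∈ S, i < k) (hk : k < n) :
    (List.range n).filter (fun i => i ∉ insert k S)
      = (List.range k).filter (fun i => i ∉ S) ++ List.range' (k+1) (n - (k+1)) := by
  rw [range_split k n (le_of_lt hk), List.filter_append]
  congr 1
  · refine List.filter_congr ?_
    intro x hx
    have hxk : x < k := List.mem_range.mp hx
    simp only [Finset.mem_insert, decide_eq_decide]
    constructor
    · intro h hc
      exact h (Or.inr hc)
    · rintro h (rfl | hc)
      · omega
      · exact h hc
  · rw [(by omega : n - (k+1) = n - k - 1),
      (by omega : n - k = (n - k - 1) + 1), List.range'_succ, List.filter_cons]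
    rw [if_neg (by simp)]
    refine List.filter_eq_self.mpr ?_
    intro a ha
    have h3 := (List.mem_range'_1.mp ha).1
    simp only [Finset.mem_insert, decide_eq_true_eq]
    rintro (rfl | hc)
    · omega
    · exact absurd (hsub a hc) (by omega)

end Filters

theorem TW_me (d : Fin N) (w : List (Fin N)) (k : ℕ) (S : Finset ℕ)
    (hsub : S ⊆ Finset.range k) (hk : k < w.length) :
    TW d (me d w k) S = TW d w (insert k S) := by
  have hsub' : ∀ i ∈ S, i < k := fun i hi => Finset.mem_range.mp (hsub hi)
  have hlen : (me d w k).length = w.length := me_length d w k hk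
  have htk : (w.take k).length = k := by simp; omega
  rw [TW, TW, hlen]
  rw [fil2 S k w.length hsub' (le_of_lt hk), fil1 S k w.length hsub' (le_of_lt hk),
      fil3 S k w.length hsub' hk, fil4 S k w.length hsub' hk]
  have hmap1 : ((List.range k).filter (fun i => i ∉ S)).map (fun i => (me d w k).getD i d)
      = ((List.range k).filter (fun i => i ∉ S)).map (fun i => w.getD i d) :=
    List.map_congr_left (fun i hi =>
      getD_me_lt d w k i (List.mem_range.mp (List.mem_of_mem_filter hi)) hk)
  have hmap2 : ((List.range k).filter (fun i => i ∈ S)).map (fun i => (me d w k).getD i d)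
      = ((List.range k).filter (fun i => i ∈ S)).map (fun i => w.getD i d) :=
    List.map_congr_left (fun i hi =>
      getD_me_lt d w k i (List.mem_range.mp (List.mem_of_mem_filter hi)) hk)
  have hmap3 : (List.range' k (w.length - k)).map (fun i => (me d w k).getD i d)
      = w.drop (k+1) ++ [w.getD k d] := by
    rw [map_getD_range' d (w.length - k) k (me d w k) (by omega)]
    rw [me_closed, List.append_assoc]
    exact List.drop_left' htk
  have hmap4 : (List.range' (k+1) (w.length - (k+1))).map (fun i => w.getD i d)
      = w.drop (k+1) := map_getD_range' d _ (k+1) w (by omega)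
  rw [List.map_append, List.map_append, hmap1, hmap3, hmap4]
  simp only [List.map_reverse]
  rw [hmap2]
  simp [List.append_assoc]

theorem TW_compl (d : Fin N) (w : List (Fin N)) (n : ℕ) (S : Finset ℕ)
    (hw : w.length = n) (hn : 1 ≤ n) (hsub : S ⊆ Finset.range (n-1)) :
    (TW d w S).reverse = TW d w (Finset.range (n-1) \ S) := by
  have hsub' : ∀ i ∈ S, i < n - 1 := fun i hi => Finset.mem_range.mp (hsub hi)
  have hr : List.range n = List.range (n-1) ++ [n-1] := by
    conv_lhs => rw [(by omega : n = (n-1)+1)]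
    exact List.range_succ (n := n-1)
  set T := Finset.range (n-1) \ S with hT
  have g1 : (List.range n).filter (fun i => i ∈ S)
      = (List.range (n-1)).filter (fun i => i ∈ S) := by
    rw [hr, List.filter_append]
    have : [n-1].filter (fun i => decide (i ∈ S)) = [] := by
      simp only [List.filter_eq_nil_iff]
      intro a ha
      simp only [List.mem_singleton] at ha
      subst ha
      simp only [decide_eq_true_eq]
      exact fun hc => absurd (hsub' _ hc) (by omega)
    rw [this, List.append_nil]
  have g2 : (List.range n).filter (fun i => i ∉ S)
      = (List.range (n-1)).filter (fun i => i ∉ S) ++ [n-1] := by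
    rw [hr, List.filter_append]
    congr 1
    rw [List.filter_eq_self]
    intro a ha
    simp only [List.mem_singleton] at ha
    subst ha
    simp only [decide_eq_true_eq]
    exact fun hc => absurd (hsub' _ hc) (by omega)
  have g3 : (List.range n).filter (fun i => i ∈ T)
      = (List.range (n-1)).filter (fun i => i ∉ S) := by
    rw [hr, List.filter_append]
    have h1 : [n-1].filter (fun i => decide (i ∈ T)) = [] := by
      simp [hT, Finset.mem_sdiff]
    rw [h1, List.append_nil]
    refine List.filter_congr ?_
    intro x hx
    have hxk : x < n-1 := List.mem_range.mp hx
    simp [hT, Finset.mem_sdiff, hxk]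
  have g4 : (List.range n).filter (fun i => i ∉ T)
      = (List.range (n-1)).filter (fun i => i ∈ S) ++ [n-1] := by
    rw [hr, List.filter_append]
    congr 1
    · refine List.filter_congr ?_
      intro x hx
      have hxk : x < n-1 := List.mem_range.mp hx
      simp [hT, Finset.mem_sdiff, hxk]
    · simp [hT, Finset.mem_sdiff]
  rw [TW, TW, hw, g1, g2, g3, g4]
  simp only [List.map_reverse, List.map_append, List.reverse_append, List.reverse_reverse]
  simp [List.append_assoc]

theorem Ppart_single (q : Fin N → Fin N → K) (d : Fin N) (n : ℕ) :
    ∀ (k : ℕ) (w : List (Fin N)) (c : K), k ≤ n - 1 → w.length = n →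
    (((List.range' 1 k).map (fun j => (1 : Module.End K (TV K N)) -
        wordOp K q ((List.range' j (n - j)).reverse))).prod)
      (MonoidAlgebra.single (FreeMonoid.ofList w) c) =
    ∑ S ∈ (Finset.range k).powerset,
      MonoidAlgebra.single (FreeMonoid.ofList (TW d w S))
        ((-1 : K) ^ S.card * Ccoef q d w S * c) := by
  intro k
  induction k with
  | zero =>
    intro w c _ hw
    have h0 : (Finset.range 0).powerset = {∅} := rfl
    rw [h0, Finset.sum_singleton, TW_empty, Finset.card_empty, pow_zero, one_mul, Ccoef,
      Finset.prod_empty, one_mul]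
    rfl
  | succ k ih =>
    intro w c hk hw
    have hn2 : k + 2 ≤ n := by omega
    have hconcat : List.range' 1 (k+1) = List.range' 1 k ++ [k+1] := by
      have h5 := List.range'_concat (step := 1) (s := 1) (n := k)
      simpa [Nat.add_comm] using h5
    rw [hconcat, List.map_append, List.prod_append, Module.End.mul_apply]
    have hsingle : (List.map (fun j => (1 : Module.End K (TV K N)) -
        wordOp K q ((List.range' j (n - j)).reverse)) [k+1]).prod
        = 1 - wordOp K q ((List.range' (k+1) (n - (k+1))).reverse) := by
      simp
    rw [hsingle, LinearMap.sub_apply, Module.End.one_apply]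
    have hu : wordOp K q ((List.range' (k+1) (n - (k+1))).reverse)
        (MonoidAlgebra.single (FreeMonoid.ofList w) c)
        = MonoidAlgebra.single (FreeMonoid.ofList (me d w k)) (fcoef q d w k * c) := by
      have := uOp_single q d (n - k - 2) k w c (by omega)
      rw [hw] at this
      exact this
    rw [hu, map_sub, ih w c (by omega) hw,
      ih (me d w k) (fcoef q d w k * c) (by omega) (by rw [me_length d w k (by omega), hw])]
    -- rewrite the subtracted sum
    have hterm : ∀ S ∈ (Finset.range k).powerset,
        MonoidAlgebra.single (FreeMonoid.ofList (TW d (me d w k) S))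
          ((-1 : K) ^ S.card * Ccoef q d (me d w k) S * (fcoef q d w k * c))
        = - MonoidAlgebra.single (FreeMonoid.ofList (TW d w (insert k S)))
            ((-1 : K) ^ (insert k S).card * Ccoef q d w (insert k S) * c) := by
      intro S hS
      have hSsub : S ⊆ Finset.range k := Finset.mem_powerset.mp hS
      have hkS : k ∉ S := fun h => by
        have := Finset.mem_range.mp (hSsub h); omega
      have hCi : Ccoef q d w (insert k S) = fcoef q d w k * Ccoef q d w S := by
        rw [Ccoef, Finset.prod_insert hkS]
        rfl
      rw [TW_me d w k S hSsub (by omega), Ccoef_me q d w k S hSsub (by omega),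
        ← MonoidAlgebra.single_neg]
      congr 1
      rw [Finset.card_insert_of_notMem hkS, hCi]
      ring
    rw [Finset.sum_congr rfl hterm, Finset.sum_neg_distrib, sub_neg_eq_add]
    have hinj : ∀ S ∈ (Finset.range k).powerset, ∀ T ∈ (Finset.range k).powerset,
        insert k S = insert k T → S = T := by
      intro S hS T hT hST
      have hkS : k ∉ S := fun h => by
        have := Finset.mem_range.mp (Finset.mem_powerset.mp hS h); omega
      have hkT : k ∉ T := fun h => by
        have := Finset.mem_range.mp (Finset.mem_powerset.mp hT h); omega
      rw [← Finset.erase_insert hkS, ← Finset.erase_insert hkT, hST]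
    have hdis : Disjoint (Finset.range k).powerset
        (Finset.image (insert k) (Finset.range k).powerset) := by
      rw [Finset.disjoint_left]
      intro S hS hS'
      have hkS : k ∉ S := fun h => by
        have := Finset.mem_range.mp (Finset.mem_powerset.mp hS h); omega
      obtain ⟨T, _, rfl⟩ := Finset.mem_image.mp hS'
      exact hkS (Finset.mem_insert_self k T)
    rw [Finset.range_add_one, Finset.powerset_insert, Finset.sum_union hdis,
      Finset.sum_image hinj]

theorem dd_eq_prod (q : Fin N → Fin N → K) (d : Fin N) :
    ∀ w : List (Fin N), dd q w = ∏ i ∈ Finset.range w.length, fcoef q d w i := by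
  intro w
  induction w with
  | nil => simp [dd]
  | cons a l ih =>
    rw [dd, ih, List.length_cons, Finset.prod_range_succ']
    have h0 : fcoef q d (a :: l) 0 = (l.map (q a)).prod := rfl
    have hs : ∀ i, fcoef q d (a :: l) (i+1) = fcoef q d l i := fun i => rfl
    rw [h0, Finset.prod_congr rfl (fun i _ => hs i)]
    ring

theorem Ccoef_compl (q : Fin N → Fin N → K) (d : Fin N) (n : ℕ) (w : List (Fin N))
    (S : Finset ℕ) (hw : w.length = n) (hn : 1 ≤ n) (hsub : S ⊆ Finset.range (n-1)) :
    Ccoef q d w S * Ccoef q d w (Finset.range (n-1) \ S) = dd q w := by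
  have hw' : w.length = (n-1)+1 := by omega
  rw [Ccoef, Ccoef, ← Finset.prod_union Finset.disjoint_sdiff,
    Finset.union_sdiff_of_subset hsub]
  rw [dd_eq_prod q d w, hw', Finset.prod_range_succ,
    fcoef_last q d w (n-1) (by omega), mul_one]

theorem fcoef_ne_zero (q : Fin N → Fin N → K) (d : Fin N) (w : List (Fin N)) (i : ℕ)
    (hq0 : ∀ a b, q a b ≠ 0) : fcoef q d w i ≠ 0 := by
  rw [fcoef]
  refine List.prod_ne_zero ?_
  intro h
  obtain ⟨a, _, ha⟩ := List.mem_map.mp h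
  exact hq0 _ _ ha

theorem Ccoef_ne_zero (q : Fin N → Fin N → K) (d : Fin N) (w : List (Fin N)) (S : Finset ℕ)
    (hq0 : ∀ a b, q a b ≠ 0) : Ccoef q d w S ≠ 0 := by
  rw [Ccoef]
  exact Finset.prod_ne_zero_iff.mpr (fun i _ => fcoef_ne_zero q d w i hq0)

theorem prod_map_inv (f : Fin N → K) (l : List (Fin N)) :
    (l.map (fun a => (f a)⁻¹)).prod = ((l.map f).prod)⁻¹ := by
  induction l with
  | nil => simp
  | cons a l ih => simp [ih, mul_inv, mul_comm]

theorem fcoef_inv (q : Fin N → Fin N → K) (d : Fin N) (w : List (Fin N)) (i : ℕ) :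
    fcoef (fun a b => (q a b)⁻¹) d w i = (fcoef q d w i)⁻¹ := by
  rw [fcoef, fcoef]
  exact prod_map_inv _ _

theorem Ccoef_inv (q : Fin N → Fin N → K) (d : Fin N) (w : List (Fin N)) (S : Finset ℕ) :
    Ccoef (fun a b => (q a b)⁻¹) d w S = (Ccoef q d w S)⁻¹ := by
  rw [Ccoef, Ccoef, ← Finset.prod_inv_distrib]
  exact Finset.prod_congr rfl (fun i _ => fcoef_inv q d w i)

theorem grand (q : Fin N → Fin N → K) (hsym : ∀ a b, q a b = q b a)
    (hq0 : ∀ a b, q a b ≠ 0) (d : Fin N) (n : ℕ) (hn : 2 ≤ n)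
    (w : List (Fin N)) (hw : w.length = n) (c : K) :
    deltaOp K q n (POp K q n (MonoidAlgebra.single (FreeMonoid.ofList w) c)) =
      ((-1 : K) ^ (n - 1)) •
        POp K (fun a b => (q a b)⁻¹) n
          (thetaOp K q n (MonoidAlgebra.single (FreeMonoid.ofList w) c)) := by
  have hPop := Ppart_single q d n (n-1) w c le_rfl hw
  rw [POp, hPop, map_sum]
  rw [theta_single q hsym d n w c hw, POp,
    Ppart_single (fun a b => (q a b)⁻¹) d n (n-1) w (dd q w * dd q w * c) le_rfl hw,
    Finset.smul_sum]
  refine Finset.sum_nbij' (fun S => Finset.range (n-1) \ S) (fun S => Finset.range (n-1) \ S)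
    ?_ ?_ ?_ ?_ ?_
  · intro S _
    exact Finset.mem_powerset.mpr (Finset.sdiff_subset)
  · intro S _
    exact Finset.mem_powerset.mpr (Finset.sdiff_subset)
  · intro S hS
    exact Finset.sdiff_sdiff_eq_self (Finset.mem_powerset.mp hS)
  · intro S hS
    exact Finset.sdiff_sdiff_eq_self (Finset.mem_powerset.mp hS)
  · intro S hS
    have hsub : S ⊆ Finset.range (n-1) := Finset.mem_powerset.mp hS
    have hlenTW : (TW d w S).length = n := by
      rw [(TW_perm d w S).length_eq, hw]
    rw [delta_single q d n (TW d w S) _ hlenTW]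
    rw [dd_perm q hsym (TW_perm d w S)]
    rw [TW_compl d w n S hw (by omega) hsub]
    rw [MonoidAlgebra.smul_single]
    congr 1
    -- scalar identity
    have hcard : S.card ≤ n - 1 := by
      have := Finset.card_le_card hsub
      simpa using this
    have hcards : (Finset.range (n-1) \ S).card = (n-1) - S.card := by
      rw [Finset.card_sdiff_of_subset hsub, Finset.card_range]
    have hCC : Ccoef q d w S * Ccoef q d w (Finset.range (n-1) \ S) = dd q w :=
      Ccoef_compl q d n w S hw (by omega) hsub
    have hC0 : Ccoef q d w (Finset.range (n-1) \ S) ≠ 0 := Ccoef_ne_zero q d w _ hq0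
    rw [Ccoef_inv, hcards]
    have hsign : (-1 : K) ^ (n-1) * (-1 : K) ^ ((n-1) - S.card)
        = (-1 : K) ^ S.card := by
      rw [← pow_add, (by omega : (n-1) + ((n-1) - S.card) = 2 * ((n-1) - S.card) + S.card),
        pow_add, pow_mul, neg_one_sq, one_pow, one_mul]
    calc dd q w * ((-1 : K) ^ S.card * Ccoef q d w S * c)
        = (-1 : K) ^ S.card * (Ccoef q d w S * dd q w * c) := by ring
      _ = (-1 : K) ^ (n-1) * ((-1 : K) ^ ((n-1) - S.card) *
            (Ccoef q d w S * dd q w * c)) := by rw [← hsign]; ring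
      _ = (-1 : K) ^ (n-1) * ((-1 : K) ^ ((n-1) - S.card) *
            (Ccoef q d w (Finset.range (n-1) \ S))⁻¹ * (dd q w * dd q w * c)) := by
          rw [← hCC]
          field_simp
      _ = (-1 : K) ^ (n-1) • ((-1 : K) ^ ((n-1) - S.card) *
            (Ccoef q d w (Finset.range (n-1) \ S))⁻¹ * (dd q w * dd q w * c)) := by
          rw [smul_eq_mul]

theorem grand_sum (q : Fin N → Fin N → K) (hsym : ∀ a b, q a b = q b a)
    (hq0 : ∀ a b, q a b ≠ 0) (d : Fin N) (n : ℕ) (hn : 2 ≤ n) (v : TV K N)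
    (hdeg : ∀ w ∈ v.coeff.support, (FreeMonoid.toList w).length = n) :
    deltaOp K q n (POp K q n v) = ((-1 : K) ^ (n - 1)) •
      POp K (fun a b => (q a b)⁻¹) n (thetaOp K q n v) := by
  conv_lhs => rw [← MonoidAlgebra.sum_coeff_single v]
  conv_rhs => rw [← MonoidAlgebra.sum_coeff_single v]
  rw [map_finsuppSum, map_finsuppSum, map_finsuppSum, map_finsuppSum, Finsupp.smul_sum]
  refine Finsupp.sum_congr ?_
  intro w hw
  have h := grand q hsym hq0 d n hn (FreeMonoid.toList w) (hdeg w hw) (v.coeff w)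
  simpa using h

section Bar

variable (bar : K ≃+* K)

theorem barT_single (a : FreeMonoid (Fin N)) (b : K) :
    barT K bar (MonoidAlgebra.single a b) = MonoidAlgebra.single a (bar b) := by
  show MonoidAlgebra.ofCoeff _ = _
  rw [MonoidAlgebra.coeff_single, Finsupp.mapRange_single]; rfl

theorem barT_add (x y : TV K N) : barT K bar (x + y) = barT K bar x + barT K bar y :=
  by show MonoidAlgebra.ofCoeff _ = _; rw [MonoidAlgebra.coeff_add, Finsupp.mapRange_add (map_add bar)]; rfl

theorem barT_neg (x : TV K N) : barT K bar (-x) = - barT K bar x :=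
  by show MonoidAlgebra.ofCoeff _ = _; rw [MonoidAlgebra.coeff_neg, Finsupp.mapRange_neg (map_neg bar)]; rfl

theorem barT_sub (x y : TV K N) : barT K bar (x - y) = barT K bar x - barT K bar y := by
  rw [sub_eq_add_neg, barT_add, barT_neg, ← sub_eq_add_neg]

theorem barT_zero : barT K bar (0 : TV K N) = 0 := by
  ext a
  simp [barT, Finsupp.mapRange_apply]

theorem barT_barT (hbar_inv : ∀ c : K, bar (bar c) = c) (x : TV K N) :
    barT K bar (barT K bar x) = x := by
  ext a
  simp [barT, Finsupp.mapRange_apply, hbar_inv]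

theorem sigOp_single_full (q : Fin N → Fin N → K) (k : ℕ) (a : FreeMonoid (Fin N)) (b : K) :
    sigOp K q k (MonoidAlgebra.single a b) =
      if 1 ≤ k ∧ k < (FreeMonoid.toList a).length then
        MonoidAlgebra.single (FreeMonoid.ofList (swapList (FreeMonoid.toList a) k))
          (coefAt K q (FreeMonoid.toList a) k * b)
      else MonoidAlgebra.single a b := by
  rw [sigOp, LinearEquiv.conj_apply, LinearMap.comp_apply, LinearMap.comp_apply]
  erw [Finsupp.lsum_single]
  split
  · rfl
  · rfl

theorem coefAt_bar (q : Fin N → Fin N → K) (l : List (Fin N)) (k : ℕ) :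
    coefAt K (fun a b => bar (q a b)) l k = bar (coefAt K q l k) := by
  rw [coefAt, coefAt]
  rcases h1 : l[k-1]? with _ | a
  · simp [h1]
  · rcases h2 : l[k]? with _ | b
    · simp [h1, h2]
    · simp [h1, h2]

theorem barT_sigOp (q : Fin N → Fin N → K) (k : ℕ) (x : TV K N) :
    barT K bar (sigOp K q k x) = sigOp K (fun a b => bar (q a b)) k (barT K bar x) := by
  induction x using MonoidAlgebra.induction_linear with
  | zero => rw [map_zero, barT_zero, map_zero]
  | add f g hf hg => rw [map_add, barT_add, barT_add, map_add, hf, hg]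
  | single a b =>
    rw [barT_single, sigOp_single_full, sigOp_single_full]
    split
    · rw [barT_single, coefAt_bar, map_mul]
    · rw [barT_single]

theorem barT_wordOp (q : Fin N → Fin N → K) (l : List ℕ) (x : TV K N) :
    barT K bar (wordOp K q l x) = wordOp K (fun a b => bar (q a b)) l (barT K bar x) := by
  induction l generalizing x with
  | nil => rfl
  | cons k l ih =>
    have h1 : wordOp K q (k :: l) = sigOp K q k * wordOp K q l := by
      simp [wordOp]
    have h2 : wordOp K (fun a b => bar (q a b)) (k :: l)
        = sigOp K (fun a b => bar (q a b)) k * wordOp K (fun a b => bar (q a b)) l := by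
      simp [wordOp]
    rw [h1, h2, Module.End.mul_apply, Module.End.mul_apply, barT_sigOp, ih]

theorem barT_factors (q : Fin N → Fin N → K) :
    ∀ (js : List (List ℕ)) (x : TV K N),
    barT K bar (((js.map (fun u => (1 : Module.End K (TV K N)) - wordOp K q u)).prod) x)
      = ((js.map (fun u => (1 : Module.End K (TV K N)) -
          wordOp K (fun a b => bar (q a b)) u)).prod) (barT K bar x) := by
  intro js
  induction js with
  | nil => intro x; rfl
  | cons u js ih =>
    intro x
    rw [List.map_cons, List.prod_cons, List.map_cons, List.prod_cons,
      Module.End.mul_apply, Module.End.mul_apply, LinearMap.sub_apply, LinearMap.sub_apply,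
      Module.End.one_apply, Module.End.one_apply, barT_sub, barT_wordOp, ih]

theorem barT_POp (q : Fin N → Fin N → K) (n : ℕ) (x : TV K N) :
    barT K bar (POp K q n x) = POp K (fun a b => bar (q a b)) n (barT K bar x) := by
  rw [POp, POp]
  have h1 : ∀ (p : Fin N → Fin N → K), (List.range' 1 (n-1)).map
      (fun j => (1 : Module.End K (TV K N)) - wordOp K p ((List.range' j (n - j)).reverse))
      = ((List.range' 1 (n-1)).map (fun j => (List.range' j (n - j)).reverse)).map
        (fun u => (1 : Module.End K (TV K N)) - wordOp K p u) := by
    intro p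
    rw [List.map_map]
    rfl
  rw [h1, h1, barT_factors]

end Bar

end Aux
/-- with `K = 𝕂(q^{1/2})` (abstracted as a field `K` with an element `t`
playing the role of `q^{1/2}` and a bar involution with `bar t = t⁻¹`) and a symmetric
braiding matrix `q_{ij} = t^{a_{ij}}`, for every `n ≥ 2` and every `v ∈ V^{⊗n}` with
`θ_n v = v` one has `Δ_n P_n v = (−1)^{n−1} · bar(P_n (bar v))`. -/
theorem statement_18 (K : Type*) [Field K] [CharZero K] (N : ℕ) (hN : 1 ≤ N)
    (t : K) (ht : t ≠ 0)
    (bar : K ≃+* K) (hbar_inv : ∀ c : K, bar (bar c) = c) (hbar_t : bar t = t⁻¹)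
    (a : Fin N → Fin N → ℤ) (ha : ∀ i j, a i j = a j i)
    (q : Fin N → Fin N → K) (hq : ∀ i j, q i j = t ^ a i j)
    (n : ℕ) (hn : 2 ≤ n) (v : TV K N) (hv : v ∈ deg K N n)
    (hfix : thetaOp K q n v = v) :
    deltaOp K q n (POp K q n v) =
      ((-1 : K) ^ (n - 1)) • barT K bar (POp K q n (barT K bar v)) := by
  classical
  have hNpos : 0 < N := hN
  set d : Fin N := ⟨0, hNpos⟩
  have hsym : ∀ i j, q i j = q j i := by intro i j; rw [hq, hq, ha]
  have hq0 : ∀ i j, q i j ≠ 0 := by intro i j; rw [hq]; exact zpow_ne_zero _ ht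
  have hbarq : (fun a b => bar (q a b)) = fun a b => (q a b)⁻¹ := by
    funext a b
    rw [hq, map_zpow₀ bar, hbar_t, inv_zpow]
  rw [deg, Submodule.mem_comap, Finsupp.mem_supported] at hv
  have hdeg : ∀ w ∈ v.coeff.support, (FreeMonoid.toList w).length = n := fun w hw => hv hw
  have h1 := grand_sum q hsym hq0 d n hn v hdeg
  rw [hfix] at h1
  rw [h1]
  congr 1
  rw [barT_POp bar q n (barT K bar v), hbarq, barT_barT bar hbar_inv]
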